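/- Let A be a finite-dimensional mixing algebra over a field F and let S ⊆ A. Define S^{(1)} = S and S^{(k+1)} = S^{(k)}·S ∪ S·S^{(k)} for k ≥ 1 (so S^{(m)} consists of all words X_1 X_2 ⋯ X_{m−1} s_m with X_i ∈ {L_{s_i}, R_{s_i}}, s_1, …, s_m ∈ S, where L_a(x) = ax and R_a(x) = xa). Then for every m ≥ 1, Lin_m(S) = Lin_{m−1}(S) + Lin(S^{(m)}). -/
import Mathlib


open Pointwise

namespace DescLength

variable (F : Type*) [Field F] {A : Type*} [NonUnitalNonAssocRing A] [Module F A]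

/-- `Word S n a` means that `a` is a word of length `n` in letters from `S`,
i.e. a product of `n` elements of `S` with some arrangement of brackets. -/
inductive Word (S : Set A) : ℕ → A → Prop
  | of {a : A} : a ∈ S → Word S 1 a
  | mul {m n : ℕ} {a b : A} : Word S m a → Word S n b → Word S (m + n) (a * b)

/-- The set of words of length exactly `n` in letters from `S`. -/
def words (S : Set A) (n : ℕ) : Set A := {a | Word S n a}

/-- `Lin_k(S)`, where the submodule `o` plays the role of `Lin_0(S)`:
`o = ⊥` if `A` is non-unital and `o = span F {e}` if `A` is unital with unity `e`. -/
def lin (o : Submodule F A) (S : Set A) (k : ℕ) : Submodule F A :=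
  o ⊔ Submodule.span F (⋃ i ∈ Finset.Icc 1 k, words S i)

/-- `Lin_∞(S)`. -/
def linInfty (o : Submodule F A) (S : Set A) : Submodule F A := ⨆ k, lin F o S k

/-- `S` is a generating set for `A`. -/
def Generates (o : Submodule F A) (S : Set A) : Prop := linInfty F o S = ⊤

/-- The length of the set `S`: `l(S) = min {k | Lin_k(S) = Lin_∞(S)}`. -/
noncomputable def len (o : Submodule F A) (S : Set A) : ℕ := sInf {k | lin F o S k = linInfty F o S}

/-- The length of the algebra `A`: `l(A) = max {l(S) | S generates A}`. -/
noncomputable def algLen (o : Submodule F A) : ℕ := sSup {n | ∃ S : Set A, Generates F o S ∧ len F o S = n}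

/-- The sequence of differences `d_k(S)`. -/
noncomputable def dseq (o : Submodule F A) (S : Set A) : ℕ → ℕ
  | 0 => Module.finrank F o
  | k + 1 => Module.finrank F (lin F o S (k + 1)) - Module.finrank F (lin F o S k)

/-- `o` is the span of the words of length zero: `⊥` if `A` has no two-sided unity,
and the span of the unity `e` otherwise. -/
def IsUnitalSpan (o : Submodule F A) : Prop :=
  ((¬ ∃ e : A, ∀ x : A, e * x = x ∧ x * e = x) ∧ o = ⊥) ∨
  (∃ e : A, (∀ x : A, e * x = x ∧ x * e = x) ∧ o = Submodule.span F {e})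

def Ql (x y z : A) : Set A :=
  {x*(z*y), x*(y*z), y*(x*z), y*(z*x), x*y, y*x, x*z, z*x, y*z, z*y, x, y, z}

def Qr (x y z : A) : Set A :=
  {(x*z)*y, (z*x)*y, (y*z)*x, (z*y)*x, x*y, y*x, x*z, z*x, y*z, z*y, x, y, z}

def Pset (x y z : A) : Set A := Ql x y z ∪ Qr x y z

/-- `A` is mixing: `(xy)z, z(xy) ∈ Lin_1(P(x,y,z))` for all `x, y, z`. -/
def IsMixing (o : Submodule F A) : Prop :=
  ∀ x y z : A, (x*y)*z ∈ o ⊔ Submodule.span F (Pset x y z) ∧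
    z*(x*y) ∈ o ⊔ Submodule.span F (Pset x y z)

/-- `A` is left sliding: `(xy)z ∈ Lin_1(Q_l(x,y,z))` for all `x, y, z`. -/
def IsLeftSliding (o : Submodule F A) : Prop :=
  ∀ x y z : A, (x*y)*z ∈ o ⊔ Submodule.span F (Ql x y z)

/-- `A` is right sliding: `z(xy) ∈ Lin_1(Q_r(x,y,z))` for all `x, y, z`. -/
def IsRightSliding (o : Submodule F A) : Prop :=
  ∀ x y z : A, z*(x*y) ∈ o ⊔ Submodule.span F (Qr x y z)

/-- `Lin_1(a, b, aa, ab, ba)`. -/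
def lin1five (o : Submodule F A) (a b : A) : Submodule F A :=
  o ⊔ Submodule.span F {a, b, a*a, a*b, b*a}

/-- `Lin'_2(a, b, c)`. -/
def lin2' (o : Submodule F A) (a b c : A) : Submodule F A :=
  o ⊔ Submodule.span F {a, b, c, a*b, b*a, b*c, c*b, a*c, c*a}

/-- `A` is descendingly flexible. -/
def IsDescFlexible (o : Submodule F A) : Prop :=
  ∀ a b c : A, (a*b)*a ∈ lin1five F o a b ∧ a*(b*a) ∈ lin1five F o a b ∧
    (a*b)*c + (c*b)*a ∈ lin2' F o a b c ∧ a*(b*c) + c*(b*a) ∈ lin2' F o a b c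

/-- `A` is descendingly alternative. -/
def IsDescAlternative (o : Submodule F A) : Prop :=
  ∀ a b c : A, (b*a)*a ∈ lin1five F o a b ∧ a*(a*b) ∈ lin1five F o a b ∧
    (a*b)*c + (a*c)*b ∈ lin2' F o a b c ∧ a*(b*c) + b*(a*c) ∈ lin2' F o a b c

/-- `S^{(m)}`: the words obtained from a letter of `S` by repeatedly multiplying by a single
letter of `S`, on the left or on the right. -/
def chainWords (S : Set A) : ℕ → Set A
  | 0 => ∅
  | 1 => S
  | n + 2 => chainWords S (n + 1) * S ∪ S * chainWords S (n + 1)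


set_option linter.unusedSectionVars false

section AuxTest
variable {F : Type*} [Field F] {A : Type*} [NonUnitalNonAssocRing A] [Module F A]

lemma Word.one_le {S : Set A} {n : ℕ} {a : A} (h : Word S n a) : 1 ≤ n := by
  induction h with
  | of _ => exact le_refl 1
  | mul _ _ ih1 ih2 => omega

lemma word_one {S : Set A} {n : ℕ} {a : A} (h : Word S n a) (hn : n = 1) : a ∈ S := by
  cases h with
  | of h => exact h
  | mul h1 h2 => have := h1.one_le; have := h2.one_le; omega

lemma word_mem_lin (o : Submodule F A) {S : Set A} {k j : ℕ} {w : A}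
    (hw : Word S k w) (hkj : k ≤ j) : w ∈ lin F o S j := by
  refine Submodule.mem_sup_right (Submodule.subset_span ?_)
  exact Set.mem_biUnion (Finset.mem_Icc.mpr ⟨hw.one_le, hkj⟩) hw

lemma lin_mono (o : Submodule F A) {S : Set A} {k j : ℕ} (h : k ≤ j) :
    lin F o S k ≤ lin F o S j := by
  apply sup_le_sup_left
  apply Submodule.span_mono
  intro x hx
  simp only [Set.mem_iUnion, exists_prop] at hx ⊢
  obtain ⟨i, hi, hx⟩ := hx
  rw [Finset.mem_Icc] at hi
  exact ⟨i, Finset.mem_Icc.mpr ⟨hi.1, hi.2.trans h⟩, hx⟩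

lemma o_le_lin (o : Submodule F A) (S : Set A) (k : ℕ) : o ≤ lin F o S k := le_sup_left

lemma chainWords_subset_words (S : Set A) : ∀ n, chainWords S n ⊆ words S n := by
  intro n
  induction n using Nat.strong_induction_on with
  | _ n IH =>
    match n with
    | 0 => simp [chainWords]
    | 1 => intro a ha; exact Word.of ha
    | n + 2 =>
      rintro a (ha | ha)
      · obtain ⟨c, hc, s, hs, rfl⟩ := Set.mem_mul.mp ha
        have h2 := Word.mul (IH (n+1) (by omega) hc) (Word.of hs)
        rwa [show (n+1) + 1 = n + 2 by omega] at h2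
      · obtain ⟨s, hs, c, hc, rfl⟩ := Set.mem_mul.mp ha
        have := Word.mul (Word.of hs) (IH (n+1) (by omega) hc)
        rwa [show 1 + (n+1) = n + 2 by omega] at this

end AuxTest
section AuxTest2
variable {F : Type*} [Field F] {A : Type*} [NonUnitalNonAssocRing A] [Module F A]
  [SMulCommClass F A A] [IsScalarTower F A A]

lemma map_o_left {o : Submodule F A} (ho : IsUnitalSpan F o) (a : A) :
    o.map (LinearMap.mulLeft F a) ≤ Submodule.span F {a} := by
  rcases ho with ⟨-, rfl⟩ | ⟨e, he, rfl⟩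
  · simp
  · rw [Submodule.map_span, Set.image_singleton]
    simp only [LinearMap.mulLeft_apply, (he a).2]
    exact le_rfl

lemma map_o_right {o : Submodule F A} (ho : IsUnitalSpan F o) (a : A) :
    o.map (LinearMap.mulRight F a) ≤ Submodule.span F {a} := by
  rcases ho with ⟨-, rfl⟩ | ⟨e, he, rfl⟩
  · simp
  · rw [Submodule.map_span, Set.image_singleton]
    simp only [LinearMap.mulRight_apply, (he a).1]
    exact le_rfl

lemma map_mulLeft_lin {o : Submodule F A} (ho : IsUnitalSpan F o) {S : Set A} {j : ℕ} {a : A}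
    (ha : Word S j a) (k : ℕ) :
    (lin F o S k).map (LinearMap.mulLeft F a) ≤ lin F o S (k + j) := by
  rw [show lin F o S k = o ⊔ Submodule.span F (⋃ i ∈ Finset.Icc 1 k, words S i) from rfl,
    Submodule.map_sup, Submodule.map_span]
  apply sup_le
  · refine (map_o_left ho a).trans ?_
    rw [Submodule.span_singleton_le_iff_mem]
    exact word_mem_lin o ha (by have := ha.one_le; omega)
  · refine le_trans ?_ (le_sup_right : _ ≤ lin F o S (k + j))
    apply Submodule.span_mono
    rintro w ⟨v, hv, rfl⟩
    simp only [Set.mem_iUnion, exists_prop] at hv ⊢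
    obtain ⟨i, hi, hv⟩ := hv
    rw [Finset.mem_Icc] at hi
    refine ⟨j + i, Finset.mem_Icc.mpr ⟨by omega, by omega⟩, ?_⟩
    exact Word.mul ha hv

lemma map_mulRight_lin {o : Submodule F A} (ho : IsUnitalSpan F o) {S : Set A} {j : ℕ} {b : A}
    (hb : Word S j b) (k : ℕ) :
    (lin F o S k).map (LinearMap.mulRight F b) ≤ lin F o S (k + j) := by
  rw [show lin F o S k = o ⊔ Submodule.span F (⋃ i ∈ Finset.Icc 1 k, words S i) from rfl,
    Submodule.map_sup, Submodule.map_span]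
  apply sup_le
  · refine (map_o_right ho b).trans ?_
    rw [Submodule.span_singleton_le_iff_mem]
    exact word_mem_lin o hb (by have := hb.one_le; omega)
  · refine le_trans ?_ (le_sup_right : _ ≤ lin F o S (k + j))
    apply Submodule.span_mono
    rintro w ⟨v, hv, rfl⟩
    simp only [Set.mem_iUnion, exists_prop] at hv ⊢
    obtain ⟨i, hi, hv⟩ := hv
    rw [Finset.mem_Icc] at hi
    refine ⟨i + j, Finset.mem_Icc.mpr ⟨by omega, by omega⟩, ?_⟩
    exact Word.mul hv hb

lemma map_mulLeft_chain {S : Set A} {a : A} (ha : a ∈ S) {q : ℕ} (hq : 1 ≤ q) :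
    (Submodule.span F (chainWords S q)).map (LinearMap.mulLeft F a) ≤
      Submodule.span F (chainWords S (q + 1)) := by
  rw [Submodule.map_span]
  apply Submodule.span_mono
  rintro w ⟨v, hv, rfl⟩
  obtain ⟨n, rfl⟩ : ∃ n, q = n + 1 := ⟨q - 1, by omega⟩
  exact Set.mem_union_right _ (Set.mul_mem_mul ha hv)

lemma map_mulRight_chain {S : Set A} {b : A} (hb : b ∈ S) {q : ℕ} (hq : 1 ≤ q) :
    (Submodule.span F (chainWords S q)).map (LinearMap.mulRight F b) ≤
      Submodule.span F (chainWords S (q + 1)) := by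
  rw [Submodule.map_span]
  apply Submodule.span_mono
  rintro w ⟨v, hv, rfl⟩
  obtain ⟨n, rfl⟩ : ∃ n, q = n + 1 := ⟨q - 1, by omega⟩
  exact Set.mem_union_left _ (Set.mul_mem_mul hv hb)

end AuxTest2

section KeyTest
variable {F : Type*} [Field F] {A : Type*} [NonUnitalNonAssocRing A] [Module F A]
  [SMulCommClass F A A] [IsScalarTower F A A]

lemma words_subset_key {o : Submodule F A} (ho : IsUnitalSpan F o) (hmix : IsMixing F o)
    (S : Set A) :
    ∀ m (w : A), Word S m w →
      w ∈ lin F o S (m - 1) ⊔ Submodule.span F (chainWords S m) := by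
  intro m
  induction m using Nat.strong_induction_on with
  | _ m IH =>
  intro w hw
  have inner : ∀ N p q (a b : A), p + q = m → min p q ≤ N → Word S p a → Word S q b →
      a * b ∈ lin F o S (m - 1) ⊔ Submodule.span F (chainWords S m) := by
    intro N
    induction N with
    | zero =>
      intro p q a b hpq hN ha hb
      have := ha.one_le; have := hb.one_le; omega
    | succ N IHN =>
      intro p q a b hpq hN ha hb
      have hp1 := ha.one_le
      have hq1 := hb.one_le
      have short : ∀ {k : ℕ} {v : A}, Word S k v → k ≤ m - 1 →
          v ∈ lin F o S (m - 1) ⊔ Submodule.span F (chainWords S m) :=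
        fun hv hk => Submodule.mem_sup_left (word_mem_lin o hv hk)
      by_cases hp : p = 1
      · subst hp
        have haS : a ∈ S := word_one ha rfl
        have hb' := IH q (by omega) b hb
        have hmem := Submodule.mem_map_of_mem (f := LinearMap.mulLeft F a) hb'
        rw [Submodule.map_sup] at hmem
        have h1 : (lin F o S (q - 1)).map (LinearMap.mulLeft F a) ≤ lin F o S (m - 1) :=
          (map_mulLeft_lin ho (Word.of haS) (q - 1)).trans (lin_mono o (by omega))
        have h2 : (Submodule.span F (chainWords S q)).map (LinearMap.mulLeft F a) ≤
            Submodule.span F (chainWords S m) := by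
          have h3 := map_mulLeft_chain (F := F) haS hq1
          rwa [show q + 1 = m by omega] at h3
        have h4 := sup_le_sup h1 h2 hmem
        rwa [LinearMap.mulLeft_apply] at h4
      · by_cases hq : q = 1
        · subst hq
          have hbS : b ∈ S := word_one hb rfl
          have ha' := IH p (by omega) a ha
          have hmem := Submodule.mem_map_of_mem (f := LinearMap.mulRight F b) ha'
          rw [Submodule.map_sup] at hmem
          have h1 : (lin F o S (p - 1)).map (LinearMap.mulRight F b) ≤ lin F o S (m - 1) :=
            (map_mulRight_lin ho (Word.of hbS) (p - 1)).trans (lin_mono o (by omega))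
          have h2 : (Submodule.span F (chainWords S p)).map (LinearMap.mulRight F b) ≤
              Submodule.span F (chainWords S m) := by
            have h3 := map_mulRight_chain (F := F) hbS hp1
            rwa [show p + 1 = m by omega] at h3
          have h4 := sup_le_sup h1 h2 hmem
          rwa [LinearMap.mulRight_apply] at h4
        · by_cases hple : p ≤ q
          · cases ha with
            | of h => exact absurd rfl hp
            | @mul p1 p2 x y hx hy =>
              have hx1 := hx.one_le
              have hy1 := hy.one_le
              have hle : o ⊔ Submodule.span F (Pset x y b) ≤
                  lin F o S (m - 1) ⊔ Submodule.span F (chainWords S m) := by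
                apply sup_le
                · exact le_trans (o_le_lin o S (m - 1)) le_sup_left
                · rw [Submodule.span_le]
                  rintro w hw
                  simp only [Pset, Ql, Qr, Set.mem_union, Set.mem_insert_iff,
                    Set.mem_singleton_iff] at hw
                  rcases hw with (rfl|rfl|rfl|rfl|rfl|rfl|rfl|rfl|rfl|rfl|rfl|rfl|rfl) |
                    (rfl|rfl|rfl|rfl|rfl|rfl|rfl|rfl|rfl|rfl|rfl|rfl|rfl)
                  · exact IHN p1 (q + p2) x (b * y) (by omega) (by omega) hx (hb.mul hy)
                  · exact IHN p1 (p2 + q) x (y * b) (by omega) (by omega) hx (hy.mul hb)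
                  · exact IHN p2 (p1 + q) y (x * b) (by omega) (by omega) hy (hx.mul hb)
                  · exact IHN p2 (q + p1) y (b * x) (by omega) (by omega) hy (hb.mul hx)
                  · exact short (hx.mul hy) (by omega)
                  · exact short (hy.mul hx) (by omega)
                  · exact short (hx.mul hb) (by omega)
                  · exact short (hb.mul hx) (by omega)
                  · exact short (hy.mul hb) (by omega)
                  · exact short (hb.mul hy) (by omega)
                  · exact short hx (by omega)
                  · exact short hy (by omega)
                  · exact short hb (by omega)
                  · exact IHN (p1 + q) p2 (x * b) y (by omega) (by omega) (hx.mul hb) hy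
                  · exact IHN (q + p1) p2 (b * x) y (by omega) (by omega) (hb.mul hx) hy
                  · exact IHN (p2 + q) p1 (y * b) x (by omega) (by omega) (hy.mul hb) hx
                  · exact IHN (q + p2) p1 (b * y) x (by omega) (by omega) (hb.mul hy) hx
                  · exact short (hx.mul hy) (by omega)
                  · exact short (hy.mul hx) (by omega)
                  · exact short (hx.mul hb) (by omega)
                  · exact short (hb.mul hx) (by omega)
                  · exact short (hy.mul hb) (by omega)
                  · exact short (hb.mul hy) (by omega)
                  · exact short hx (by omega)
                  · exact short hy (by omega)
                  · exact short hb (by omega)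
              exact hle (hmix x y b).1
          · cases hb with
            | of h => exact absurd rfl hq
            | @mul q1 q2 x y hx hy =>
              have hx1 := hx.one_le
              have hy1 := hy.one_le
              have hle : o ⊔ Submodule.span F (Pset x y a) ≤
                  lin F o S (m - 1) ⊔ Submodule.span F (chainWords S m) := by
                apply sup_le
                · exact le_trans (o_le_lin o S (m - 1)) le_sup_left
                · rw [Submodule.span_le]
                  rintro w hw
                  simp only [Pset, Ql, Qr, Set.mem_union, Set.mem_insert_iff,
                    Set.mem_singleton_iff] at hw
                  rcases hw with (rfl|rfl|rfl|rfl|rfl|rfl|rfl|rfl|rfl|rfl|rfl|rfl|rfl) |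
                    (rfl|rfl|rfl|rfl|rfl|rfl|rfl|rfl|rfl|rfl|rfl|rfl|rfl)
                  · exact IHN q1 (p + q2) x (a * y) (by omega) (by omega) hx (ha.mul hy)
                  · exact IHN q1 (q2 + p) x (y * a) (by omega) (by omega) hx (hy.mul ha)
                  · exact IHN q2 (q1 + p) y (x * a) (by omega) (by omega) hy (hx.mul ha)
                  · exact IHN q2 (p + q1) y (a * x) (by omega) (by omega) hy (ha.mul hx)
                  · exact short (hx.mul hy) (by omega)
                  · exact short (hy.mul hx) (by omega)
                  · exact short (hx.mul ha) (by omega)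
                  · exact short (ha.mul hx) (by omega)
                  · exact short (hy.mul ha) (by omega)
                  · exact short (ha.mul hy) (by omega)
                  · exact short hx (by omega)
                  · exact short hy (by omega)
                  · exact short ha (by omega)
                  · exact IHN (q1 + p) q2 (x * a) y (by omega) (by omega) (hx.mul ha) hy
                  · exact IHN (p + q1) q2 (a * x) y (by omega) (by omega) (ha.mul hx) hy
                  · exact IHN (q2 + p) q1 (y * a) x (by omega) (by omega) (hy.mul ha) hx
                  · exact IHN (p + q2) q1 (a * y) x (by omega) (by omega) (ha.mul hy) hx
                  · exact short (hx.mul hy) (by omega)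
                  · exact short (hy.mul hx) (by omega)
                  · exact short (hx.mul ha) (by omega)
                  · exact short (ha.mul hx) (by omega)
                  · exact short (hy.mul ha) (by omega)
                  · exact short (ha.mul hy) (by omega)
                  · exact short hx (by omega)
                  · exact short hy (by omega)
                  · exact short ha (by omega)
              exact hle (hmix x y a).2
  cases hw with
  | of h => exact Submodule.mem_sup_right (Submodule.subset_span h)
  | @mul p q a b ha hb => exact inner (min p q) p q a b rfl le_rfl ha hb

end KeyTest

/-- If `A` is mixing, then for every `m ≥ 1`,
`Lin_m(S) = Lin_{m-1}(S) + Lin(S^{(m)})`, where `S^{(1)} = S` and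
`S^{(k+1)} = S^{(k)}·S ∪ S·S^{(k)}` (the set `chainWords S m`). -/
theorem lin_eq_sup_span_chainWords {F A : Type*} [Field F] [NonUnitalNonAssocRing A]
    [Module F A] [SMulCommClass F A A] [IsScalarTower F A A] [FiniteDimensional F A]
    (o : Submodule F A) (ho : IsUnitalSpan F o) (hmix : IsMixing F o) (S : Set A) :
    ∀ m : ℕ, 1 ≤ m →
      lin F o S m = lin F o S (m - 1) ⊔ Submodule.span F (chainWords S m) := by
  intro m hm
  apply le_antisymm
  · apply sup_le
    · exact le_trans (o_le_lin o S (m - 1)) le_sup_left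
    · rw [Submodule.span_le]
      intro w hw
      simp only [Set.mem_iUnion, exists_prop] at hw
      obtain ⟨i, hi, hw⟩ := hw
      rw [Finset.mem_Icc] at hi
      by_cases him : i = m
      · subst him
        exact words_subset_key ho hmix S i w hw
      · exact Submodule.mem_sup_left (word_mem_lin o hw (by omega))
  · apply sup_le
    · exact lin_mono o (by omega)
    · rw [Submodule.span_le]
      intro w hw
      exact word_mem_lin o (chainWords_subset_words S m hw) le_rfl


end DescLength
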